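/- arXiv:1005.0540 — 3 statements merged into one kernel-verified Lean document; each statement's English description precedes it below -/
import Mathlib

section
/- Let b_1 ≥ b_2 ≥ … ≥ b_ℓ > 0, w > 0, and fix t̄ with 0 < t̄ < 2π/(b_1 w). Suppose (r_1,…,r_ℓ), (r̃_1,…,r̃_ℓ) are nonnegative vectors of Euclidean norm 1, w̃ > 0 satisfies t̄ < 2π/(b_1 w̃), and for each i, r_i · sinc(b_i w t̄/2) = r̃_i · sinc(b_i w̃ t̄/2). If additionally r_i > 0 for all i, then w̃ = w and r̃_i = r_i for all i. -/
open Finset Real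

/-- The cardinal sine function `sinc x = sin x / x`, extended by `sinc 0 = 1`. -/
noncomputable def sinc (x : ℝ) : ℝ := if x = 0 then 1 else Real.sin x / x

/-!
On `(0, π]` the function `sinc x = (sin x - sin 0) / (x - 0)` is a secant slope of the strictly
concave function `sin`, hence strictly decreasing. If `w̃ < w`, every argument `bᵢ w̃ t̄ / 2` is then
smaller than `bᵢ w t̄ / 2`, so `r̃ᵢ < rᵢ` for all `i`, contradicting `∑ r̃ᵢ² = ∑ rᵢ² = 1`; by symmetry
`w̃ = w`, and then `r̃ = r` by cancelling the positive factors `sinc (bᵢ w t̄ / 2)`.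
-/

theorem sinc_eq_real_sinc : _root_.sinc = Real.sinc := rfl

namespace Real

theorem sinc_pos_of_pos_of_lt_pi {x : ℝ} (hx0 : 0 < x) (hxπ : x < π) : 0 < sinc x := by
  rw [sinc_of_ne_zero hx0.ne']
  exact div_pos (sin_pos_of_pos_of_lt_pi hx0 hxπ) hx0

theorem strictAntiOn_sinc : StrictAntiOn sinc (Set.Ioc 0 π) := by
  intro x hx y hy hxy
  have hslope := strictConcaveOn_sin_Icc.secant_strict_mono (a := 0) ⟨le_rfl, pi_pos.le⟩
    (Set.Ioc_subset_Icc_self hx) (Set.Ioc_subset_Icc_self hy) hx.1.ne' hy.1.ne' hxy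
  simpa only [sin_zero, sub_zero, ← sinc_of_ne_zero hx.1.ne', ← sinc_of_ne_zero hy.1.ne']
    using hslope

theorem lt_of_mul_sinc_eq_mul_sinc {r r' x y : ℝ} (hr : 0 < r) (hx : 0 < x) (hxy : x < y)
    (hy : y ≤ π) (h : r * sinc y = r' * sinc x) : r' < r := by
  have hsinc : sinc y < sinc x := strictAntiOn_sinc ⟨hx, hxy.le.trans hy⟩ ⟨hx.trans hxy, hy⟩ hxy
  have hsinc_pos : 0 < sinc x := sinc_pos_of_pos_of_lt_pi hx (hxy.trans_le hy)
  refine lt_of_mul_lt_mul_right (a := sinc x) ?_ hsinc_pos.le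
  rw [← h]
  exact mul_lt_mul_of_pos_left hsinc hr

end Real

theorem mul_div_two_mul_lt_pi {c c₀ t v : ℝ} (hc : c ≤ c₀) (ht : 0 ≤ t) (hv : 0 < v)
    (hc₀ : 0 < c₀) (htc : t < 2 * π / (c₀ * v)) : c * t / 2 * v < π := by
  have htc' := (lt_div_iff₀ (mul_pos hc₀ hv)).mp htc
  calc c * t / 2 * v ≤ c₀ * t / 2 * v := by gcongr
    _ < π := by linarith

theorem le_of_mul_sinc_eq_of_sum_sq_eq {ι : Type*} [Fintype ι] [Nonempty ι] {a : ι → ℝ}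
    (ha : ∀ i, 0 < a i) {w w' : ℝ} (hw' : 0 < w') (hπ : ∀ i, a i * w ≤ π) {r r' : ι → ℝ}
    (hr : ∀ i, 0 < r i) (hr' : ∀ i, 0 ≤ r' i) (hnorm : ∑ i, r i ^ 2 = ∑ i, r' i ^ 2)
    (heq : ∀ i, r i * Real.sinc (a i * w) = r' i * Real.sinc (a i * w')) : w ≤ w' := by
  by_contra! hlt
  have hr'_lt : ∀ i, r' i < r i := fun i =>
    lt_of_mul_sinc_eq_mul_sinc (hr i) (mul_pos (ha i) hw') (mul_lt_mul_of_pos_left hlt (ha i))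
      (hπ i) (heq i)
  have hsum : ∑ i, r' i ^ 2 < ∑ i, r i ^ 2 :=
    sum_lt_sum_of_nonempty univ_nonempty fun i _ =>
      pow_lt_pow_left₀ (hr'_lt i) (hr' i) two_ne_zero
  exact hsum.ne' hnorm

/-- Uniqueness step in the computation of the cut time for the nilpotent contact structure:
if two sets of geodesic parameters give the same radial components at time `t̄` before the
cut time, they coincide. -/
theorem cut_time_uniqueness {ℓ : ℕ} (hℓ : 1 ≤ ℓ) (b : Fin ℓ → ℝ)
    (hbpos : ∀ i, 0 < b i) (hbmono : ∀ i j : Fin ℓ, i ≤ j → b j ≤ b i)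
    (w : ℝ) (hw : 0 < w) (tb : ℝ)
    (htb : 0 < tb) (htc : tb < 2 * π / (b ⟨0, hℓ⟩ * w))
    (r rt : Fin ℓ → ℝ) (hr : ∀ i, 0 ≤ r i) (hrt : ∀ i, 0 ≤ rt i)
    (hrnorm : ∑ i, r i ^ 2 = 1) (hrtnorm : ∑ i, rt i ^ 2 = 1)
    (wt : ℝ) (hwt : 0 < wt) (htct : tb < 2 * π / (b ⟨0, hℓ⟩ * wt))
    (heq : ∀ i, r i * _root_.sinc (b i * w * tb / 2) = rt i * _root_.sinc (b i * wt * tb / 2))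
    (hrposall : ∀ i, 0 < r i) :
    wt = w ∧ ∀ i, rt i = r i := by
  have : Nonempty (Fin ℓ) := ⟨⟨0, hℓ⟩⟩
  have ha : ∀ i, 0 < b i * tb / 2 := fun i => by have := hbpos i; positivity
  have hπ : ∀ v, 0 < v → tb < 2 * π / (b ⟨0, hℓ⟩ * v) → ∀ i, b i * tb / 2 * v < π :=
    fun v hv htv i => mul_div_two_mul_lt_pi (hbmono _ i (Nat.zero_le _)) htb.le hv (hbpos _) htv
  have heq' : ∀ i, r i * Real.sinc (b i * tb / 2 * w) = rt i * Real.sinc (b i * tb / 2 * wt) := by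
    intro i
    have hcomm : ∀ v, b i * v * tb / 2 = b i * tb / 2 * v := fun v => by ring
    simpa only [sinc_eq_real_sinc, hcomm] using heq i
  have hsinc_pos : ∀ v, 0 < v → tb < 2 * π / (b ⟨0, hℓ⟩ * v) → ∀ i,
      0 < Real.sinc (b i * tb / 2 * v) := fun v hv htv i =>
    sinc_pos_of_pos_of_lt_pi (mul_pos (ha i) hv) (hπ v hv htv i)
  have hrtpos : ∀ i, 0 < rt i := fun i =>
    pos_of_mul_pos_left (heq' i ▸ mul_pos (hrposall i) (hsinc_pos w hw htc i))
      (hsinc_pos wt hwt htct i).le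
  have hwwt := le_of_mul_sinc_eq_of_sum_sq_eq ha hwt (fun i => (hπ w hw htc i).le) hrposall hrt
    (hrnorm.trans hrtnorm.symm) heq'
  have hwtw := le_of_mul_sinc_eq_of_sum_sq_eq ha hw (fun i => (hπ wt hwt htct i).le) hrtpos hr
    (hrtnorm.trans hrnorm.symm) fun i => (heq' i).symm
  obtain rfl := le_antisymm hwtw hwwt
  exact ⟨rfl, fun i => mul_right_cancel₀ (hsinc_pos wt hwt htct i).ne' (heq' i).symm⟩
end

section
/- Define x(r,θ,w) = (r/(b w))(cos(b w + θ) − cos θ), y(r,θ,w) = (r/(b w))(sin(b w + θ) − sin θ), z(r,w) = (r²/(2 b w²))(b w − sin(b w)). Then ∂_w z · det(∂(x,y)/∂(r,θ)) + ∂_r z · det(∂(x,y)/∂(θ,w)) = −(4 r³/(b² w⁴)) sin(b w/2)·((b w/2) cos(b w/2) − sin(b w/2)). -/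
/-!
Differentiation in `θ` rotates the planar part of the map: `∂_θ x = -y` and `∂_θ y = x`.
With the chord identity `(cos (a + θ) - cos θ)² + (sin (a + θ) - sin θ)² = 4 sin² (a / 2)` and
`sin a = sin (a + θ) cos θ - cos (a + θ) sin θ`, both Jacobian determinants become functions of
`b w` alone. After the half-angle substitution `sin (b w) = 2 s c`, `cos (b w) = 1 - 2 s²` with
`s = sin (b w / 2)`, `c = cos (b w / 2)`, the claim is a polynomial identity modulo `s² + c² = 1`.
-/

open Real Matrix

noncomputable def expX (b r θ w : ℝ) : ℝ := r / (b * w) * (cos (b * w + θ) - cos θ)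

noncomputable def expY (b r θ w : ℝ) : ℝ := r / (b * w) * (sin (b * w + θ) - sin θ)

noncomputable def expZ (b r w : ℝ) : ℝ := r ^ 2 / (2 * b * w ^ 2) * (b * w - sin (b * w))

theorem sq_cos_add_sub_cos_add_sq_sin_add_sub_sin (a θ : ℝ) :
    (cos (a + θ) - cos θ) ^ 2 + (sin (a + θ) - sin θ) ^ 2 = 4 * sin (a / 2) ^ 2 := by
  have hcos : cos a = cos (a + θ) * cos θ + sin (a + θ) * sin θ := by
    rw [← cos_sub, add_sub_cancel_right]
  have hhalf : cos a = 1 - 2 * sin (a / 2) ^ 2 := by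
    rw [← cos_two_mul_eq_one_sub, mul_div_cancel₀ a two_ne_zero]
  nlinarith [sin_sq_add_cos_sq (a + θ), sin_sq_add_cos_sq θ]

section Derivatives

variable (b r θ w : ℝ)

theorem hasDerivAt_expX_r :
    HasDerivAt (fun r' => expX b r' θ w) ((cos (b * w + θ) - cos θ) / (b * w)) r := by
  simpa [expX, div_mul_eq_mul_div] using
    ((hasDerivAt_id r).mul_const (cos (b * w + θ) - cos θ)).div_const (b * w)

theorem hasDerivAt_expY_r :
    HasDerivAt (fun r' => expY b r' θ w) ((sin (b * w + θ) - sin θ) / (b * w)) r := by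
  simpa [expY, div_mul_eq_mul_div] using
    ((hasDerivAt_id r).mul_const (sin (b * w + θ) - sin θ)).div_const (b * w)

theorem hasDerivAt_expX_θ : HasDerivAt (fun θ' => expX b r θ' w) (-expY b r θ w) θ := by
  refine ((((hasDerivAt_id' θ).const_add (b * w)).cos.sub (hasDerivAt_id' θ).cos).const_mul
    (r / (b * w))).congr_deriv ?_
  simp only [expY]; ring

theorem hasDerivAt_expY_θ : HasDerivAt (fun θ' => expY b r θ' w) (expX b r θ w) θ := by
  refine ((((hasDerivAt_id' θ).const_add (b * w)).sin.sub (hasDerivAt_id' θ).sin).const_mul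
    (r / (b * w))).congr_deriv ?_
  simp only [expX]; ring

variable {b w}

theorem hasDerivAt_expX_w (hb : b ≠ 0) (hw : w ≠ 0) :
    HasDerivAt (fun w' => expX b r θ w')
      (-expX b r θ w / w - r / w * sin (b * w + θ)) w := by
  refine (((hasDerivAt_const w r).div ((hasDerivAt_id' w).const_mul b) (mul_ne_zero hb hw)).mul
    ((((hasDerivAt_id' w).const_mul b).add_const θ).cos.sub_const (cos θ))).congr_deriv ?_
  simp only [expX, Pi.div_apply]; field_simp; ring

theorem hasDerivAt_expY_w (hb : b ≠ 0) (hw : w ≠ 0) :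
    HasDerivAt (fun w' => expY b r θ w')
      (-expY b r θ w / w + r / w * cos (b * w + θ)) w := by
  refine (((hasDerivAt_const w r).div ((hasDerivAt_id' w).const_mul b) (mul_ne_zero hb hw)).mul
    ((((hasDerivAt_id' w).const_mul b).add_const θ).sin.sub_const (sin θ))).congr_deriv ?_
  simp only [expY, Pi.div_apply]; field_simp; ring

theorem hasDerivAt_expZ_r :
    HasDerivAt (fun r' => expZ b r' w) (r / (b * w ^ 2) * (b * w - sin (b * w))) r := by
  refine (((hasDerivAt_pow 2 r).div_const (2 * b * w ^ 2)).mul_const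
    (b * w - sin (b * w))).congr_deriv ?_
  ring

theorem hasDerivAt_expZ_w (hb : b ≠ 0) (hw : w ≠ 0) :
    HasDerivAt (fun w' => expZ b r w')
      (r ^ 2 * (1 - cos (b * w)) / (2 * w ^ 2) - 2 * expZ b r w / w) w := by
  refine (((hasDerivAt_const w (r ^ 2)).div ((hasDerivAt_pow 2 w).const_mul (2 * b))
    (by positivity)).mul (((hasDerivAt_id' w).const_mul b).sub
    ((hasDerivAt_id' w).const_mul b).sin)).congr_deriv ?_
  simp only [expZ, Pi.div_apply, Pi.sub_apply]; field_simp; ring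

end Derivatives

section Jacobians

variable (b r θ w : ℝ)

theorem det_jacobian_rθ :
    !![deriv (fun r' => expX b r' θ w) r, deriv (fun θ' => expX b r θ' w) θ;
      deriv (fun r' => expY b r' θ w) r, deriv (fun θ' => expY b r θ' w) θ].det =
      4 * r * sin (b * w / 2) ^ 2 / (b * w) ^ 2 := by
  rw [det_fin_two_of, (hasDerivAt_expX_r ..).deriv, (hasDerivAt_expX_θ ..).deriv,
    (hasDerivAt_expY_r ..).deriv, (hasDerivAt_expY_θ ..).deriv]
  simp only [expX, expY]
  linear_combination r / (b * w) ^ 2 * sq_cos_add_sub_cos_add_sq_sin_add_sub_sin (b * w) θ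

variable {b w}

theorem det_jacobian_θw (hb : b ≠ 0) (hw : w ≠ 0) :
    !![deriv (fun θ' => expX b r θ' w) θ, deriv (fun w' => expX b r θ w') w;
      deriv (fun θ' => expY b r θ' w) θ, deriv (fun w' => expY b r θ w') w].det =
      r ^ 2 / (b * w ^ 2) * (4 * sin (b * w / 2) ^ 2 / (b * w) - sin (b * w)) := by
  rw [det_fin_two_of, (hasDerivAt_expX_θ ..).deriv, (hasDerivAt_expX_w _ _ hb hw).deriv,
    (hasDerivAt_expY_θ ..).deriv, (hasDerivAt_expY_w _ _ hb hw).deriv]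
  have hsin : sin (b * w) = sin (b * w + θ) * cos θ - cos (b * w + θ) * sin θ := by
    rw [← sin_sub, add_sub_cancel_right]
  simp only [expX, expY]
  field_simp
  linear_combination
    r ^ 2 * sq_cos_add_sub_cos_add_sq_sin_add_sub_sin (b * w) θ + r ^ 2 * b * w * hsin

end Jacobians

theorem jacobian_combination_general (b : ℝ) (hb : 0 < b) (r : ℝ) (θ w : ℝ)
    (hw : w ≠ 0) :
    deriv (fun w' => expZ b r w') w *
        (!![deriv (fun r' => expX b r' θ w) r, deriv (fun θ' => expX b r θ' w) θ;
            deriv (fun r' => expY b r' θ w) r, deriv (fun θ' => expY b r θ' w) θ]).det +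
      deriv (fun r' => expZ b r' w) r *
        (!![deriv (fun θ' => expX b r θ' w) θ, deriv (fun w' => expX b r θ w') w;
            deriv (fun θ' => expY b r θ' w) θ, deriv (fun w' => expY b r θ w') w]).det =
      -(4 * r ^ 3 / (b ^ 2 * w ^ 4)) * sin (b * w / 2) *
        (b * w / 2 * cos (b * w / 2) - sin (b * w / 2)) := by
  have hb0 : b ≠ 0 := hb.ne'
  rw [det_jacobian_rθ, det_jacobian_θw r θ hb0 hw, (hasDerivAt_expZ_w r hb0 hw).deriv,
    (hasDerivAt_expZ_r ..).deriv, expZ]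
  have hsin : sin (b * w) = 2 * sin (b * w / 2) * cos (b * w / 2) := by
    rw [← sin_two_mul, mul_div_cancel₀ _ two_ne_zero]
  have hcos : cos (b * w) = 1 - 2 * sin (b * w / 2) ^ 2 := by
    rw [← cos_two_mul_eq_one_sub, mul_div_cancel₀ _ two_ne_zero]
  rw [hsin, hcos]
  field_simp
  linear_combination 8 * r ^ 3 * b * w * sin (b * w / 2) ^ 2 * sin_sq_add_cos_sq (b * w / 2)

/-- Key simplification in the Jacobian of the exponential map of a nilpotent contact
structure: `∂_w z · det ∂(x,y)/∂(r,θ) + ∂_r z · det ∂(x,y)/∂(θ,w)`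
`= −(4r³/(b²w⁴)) sin(bw/2)((bw/2)cos(bw/2) − sin(bw/2))`. -/
theorem jacobian_combination (b : ℝ) (hb : 0 < b) (r : ℝ) (hr : 0 < r) (θ w : ℝ)
    (hw : w ≠ 0) :
    deriv (fun w' => expZ b r w') w *
        (!![deriv (fun r' => expX b r' θ w) r, deriv (fun θ' => expX b r θ' w) θ;
            deriv (fun r' => expY b r' θ w) r, deriv (fun θ' => expY b r θ' w) θ]).det +
      deriv (fun r' => expZ b r' w) r *
        (!![deriv (fun θ' => expX b r θ' w) θ, deriv (fun w' => expX b r θ w') w;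
            deriv (fun θ' => expY b r θ' w) θ, deriv (fun w' => expY b r θ w') w]).det =
      -(4 * r ^ 3 / (b ^ 2 * w ^ 4)) * sin (b * w / 2) *
        (b * w / 2 * cos (b * w / 2) - sin (b * w / 2)) :=
  jacobian_combination_general b hb r θ w hw
end

section
/- Let b₁(t) = 1 + t c₁ and b₂(t) = 1 + t c₂ with constants c₁ ≠ c₂, define a(t) = π / max(b₁(t), b₂(t)) and G(t,s) = (1/s⁶)[ sin²(b₂ s) sin(b₁ s)(b₁ s cos(b₁ s) − sin(b₁ s)) + sin²(b₁ s) sin(b₂ s)(b₂ s cos(b₂ s) − sin(b₂ s)) ]. Then G(t, a(t)) = 0 for all t near 0, and all partial derivatives of G of order ≤ 2 vanish at (t,s) = (0, π). -/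
open Real Filter Topology

/-!
The integrand factors as `sin (β₁ s) * sin (β₂ s) * C(β₁, β₂, s)`, and at a resonance point,
where both `β₁ s` and `β₂ s` are multiples of `π`, the cofactor `C` vanishes as well, its two
terms carrying a factor `sin (β₂ s)` resp. `sin (β₁ s)`. A product of three smooth functions
vanishing at a point vanishes there to order three, by the Leibniz rule. Along `s = a t` the
larger frequency hits `π` exactly, which kills the first factor or the second.
-/

section

variable {𝕜 E F A : Type*} [NontriviallyNormedField 𝕜]
  [NormedAddCommGroup E] [NormedSpace 𝕜 E] [NormedAddCommGroup F] [NormedSpace 𝕜 F]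
  [NormedRing A] [NormedAlgebra 𝕜 A]

variable (𝕜) in
def VanishesToOrder (n : ℕ) (f : E → F) (x : E) : Prop :=
  ∀ k < n, iteratedFDeriv 𝕜 k f x = 0

theorem vanishesToOrder_one_iff {f : E → F} {x : E} : VanishesToOrder 𝕜 1 f x ↔ f x = 0 := by
  simp [VanishesToOrder, ← norm_eq_zero (a := iteratedFDeriv 𝕜 0 f x),
    norm_iteratedFDeriv_zero]

theorem norm_iteratedFDeriv_mul_le_of_contDiffAt {f g : E → A} {x : E} {n : ℕ}
    (hf : ContDiffAt 𝕜 n f x) (hg : ContDiffAt 𝕜 n g x) :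
    ‖iteratedFDeriv 𝕜 n (fun y => f y * g y) x‖ ≤ ∑ i ∈ Finset.range (n + 1),
      (n.choose i : ℝ) * ‖iteratedFDeriv 𝕜 i f x‖ * ‖iteratedFDeriv 𝕜 (n - i) g x‖ := by
  obtain ⟨u, hu, hfu⟩ := hf.contDiffOn le_rfl (by simp)
  obtain ⟨v, hv, hgv⟩ := hg.contDiffOn le_rfl (by simp)
  obtain ⟨s, hsuv, hs, hxs⟩ := mem_nhds_iff.1 (inter_mem hu hv)
  have h := norm_iteratedFDerivWithin_mul_le (hfu.mono fun y hy => (hsuv hy).1)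
    (hgv.mono fun y hy => (hsuv hy).2) hs.uniqueDiffOn hxs le_rfl
  simpa only [iteratedFDerivWithin_of_isOpen _ hs hxs] using h

theorem VanishesToOrder.mul {f g : E → A} {x : E} {m n : ℕ}
    (hf : ContDiffAt 𝕜 (m + n - 1 : ℕ) f x) (hg : ContDiffAt 𝕜 (m + n - 1 : ℕ) g x)
    (hfm : VanishesToOrder 𝕜 m f x) (hgn : VanishesToOrder 𝕜 n g x) :
    VanishesToOrder 𝕜 (m + n) (fun y => f y * g y) x := by
  intro k hk
  have hkN : (k : WithTop ℕ∞) ≤ (m + n - 1 : ℕ) := by exact_mod_cast (by omega : k ≤ m + n - 1)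
  refine norm_le_zero_iff.1 <| (norm_iteratedFDeriv_mul_le_of_contDiffAt
    (hf.of_le hkN) (hg.of_le hkN)).trans_eq <| Finset.sum_eq_zero fun i hi => ?_
  rcases lt_or_ge i m with him | hmi
  · simp [hfm i him]
  · simp [hgn (k - i) (by grind)]

end

noncomputable def jacobianIntegrand (β₁ β₂ s : ℝ) : ℝ :=
  1 / s ^ 6 *
    (sin (β₂ * s) ^ 2 * sin (β₁ * s) * (β₁ * s * cos (β₁ * s) - sin (β₁ * s)) +
      sin (β₁ * s) ^ 2 * sin (β₂ * s) * (β₂ * s * cos (β₂ * s) - sin (β₂ * s)))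

noncomputable def jacobianCofactor (β₁ β₂ s : ℝ) : ℝ :=
  1 / s ^ 6 *
    (sin (β₂ * s) * (β₁ * s * cos (β₁ * s) - sin (β₁ * s)) +
      sin (β₁ * s) * (β₂ * s * cos (β₂ * s) - sin (β₂ * s)))

theorem jacobianIntegrand_eq_mul (β₁ β₂ s : ℝ) :
    jacobianIntegrand β₁ β₂ s = sin (β₁ * s) * sin (β₂ * s) * jacobianCofactor β₁ β₂ s := by
  unfold jacobianIntegrand jacobianCofactor
  ring

theorem jacobianIntegrand_eq_zero_of_mul_eq_pi {β₁ β₂ s : ℝ} (h : β₁ * s = π ∨ β₂ * s = π) :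
    jacobianIntegrand β₁ β₂ s = 0 := by
  rcases h with h | h <;> simp [jacobianIntegrand_eq_mul, h]

theorem jacobianIntegrand_div_max_eq_zero {β₁ β₂ : ℝ} (h : max β₁ β₂ ≠ 0) :
    jacobianIntegrand β₁ β₂ (π / max β₁ β₂) = 0 := by
  apply jacobianIntegrand_eq_zero_of_mul_eq_pi
  rcases max_choice β₁ β₂ with hm | hm <;> rw [hm] at h ⊢
  · exact .inl (mul_div_cancel₀ π h)
  · exact .inr (mul_div_cancel₀ π h)

section

variable {E : Type*} [NormedAddCommGroup E] [NormedSpace ℝ E]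

theorem contDiffAt_jacobianCofactor {n : WithTop ℕ∞} {β₁ β₂ σ : E → ℝ} {x : E}
    (hβ₁ : ContDiffAt ℝ n β₁ x) (hβ₂ : ContDiffAt ℝ n β₂ x) (hσ : ContDiffAt ℝ n σ x)
    (hσx : σ x ≠ 0) :
    ContDiffAt ℝ n (fun y => jacobianCofactor (β₁ y) (β₂ y) (σ y)) x := by
  unfold jacobianCofactor
  fun_prop (disch := positivity)

theorem vanishesToOrder_three_jacobianIntegrand {β₁ β₂ σ : E → ℝ} {x : E}
    (hβ₁ : ContDiffAt ℝ 2 β₁ x) (hβ₂ : ContDiffAt ℝ 2 β₂ x) (hσ : ContDiffAt ℝ 2 σ x)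
    (hσx : σ x ≠ 0) (h₁ : sin (β₁ x * σ x) = 0) (h₂ : sin (β₂ x * σ x) = 0) :
    VanishesToOrder ℝ 3 (fun y => jacobianIntegrand (β₁ y) (β₂ y) (σ y)) x := by
  simp only [jacobianIntegrand_eq_mul]
  have hs₁ : ContDiffAt ℝ 2 (fun y => sin (β₁ y * σ y)) x := by fun_prop
  have hs₂ : ContDiffAt ℝ 2 (fun y => sin (β₂ y * σ y)) x := by fun_prop
  refine VanishesToOrder.mul (m := 2) (n := 1) (hs₁.mul hs₂)
    (contDiffAt_jacobianCofactor hβ₁ hβ₂ hσ hσx) ?_ ?_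
  · exact VanishesToOrder.mul (m := 1) (n := 1) (hs₁.of_le one_le_two) (hs₂.of_le one_le_two)
      (vanishesToOrder_one_iff.2 h₁) (vanishesToOrder_one_iff.2 h₂)
  · exact vanishesToOrder_one_iff.2 (by simp [jacobianCofactor, h₁, h₂])

end

theorem resonance_vanishing_general (c₁ c₂ : ℝ) :
    let b₁ : ℝ → ℝ := fun t => 1 + t * c₁
    let b₂ : ℝ → ℝ := fun t => 1 + t * c₂
    let a : ℝ → ℝ := fun t => π / max (b₁ t) (b₂ t)
    let G : ℝ → ℝ → ℝ := fun t s =>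
      1 / s ^ 6 *
        (sin (b₂ t * s) ^ 2 * sin (b₁ t * s) *
            (b₁ t * s * cos (b₁ t * s) - sin (b₁ t * s)) +
          sin (b₁ t * s) ^ 2 * sin (b₂ t * s) *
            (b₂ t * s * cos (b₂ t * s) - sin (b₂ t * s)))
    (∀ᶠ t in 𝓝 (0:ℝ), G t (a t) = 0) ∧
    (∀ k : ℕ, k ≤ 2 →
      iteratedFDeriv ℝ k (fun p : ℝ × ℝ => G p.1 p.2) (0, π) = 0) := by
  intro b₁ b₂ a G
  refine ⟨?_, fun k hk => ?_⟩
  · have hmax : ContinuousAt (fun t => max (b₁ t) (b₂ t)) 0 := by fun_prop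
    have hmax0 : max (b₁ 0) (b₂ 0) ≠ 0 := by simp [b₁, b₂]
    filter_upwards [hmax.eventually_ne hmax0] with t ht
    exact jacobianIntegrand_div_max_eq_zero ht
  · exact vanishesToOrder_three_jacobianIntegrand (β₁ := fun p : ℝ × ℝ => b₁ p.1)
      (β₂ := fun p => b₂ p.1) (σ := Prod.snd) (by fun_prop) (by fun_prop) (by fun_prop)
      pi_ne_zero (by simp [b₁]) (by simp [b₂]) k (by omega)

/-- Vanishing of the Jacobian integrand and of its derivatives up to order 2 at a
resonance point where two frequencies cross transversally. -/
theorem resonance_vanishing (c₁ c₂ : ℝ) (hc : c₁ ≠ c₂) :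
    let b₁ : ℝ → ℝ := fun t => 1 + t * c₁
    let b₂ : ℝ → ℝ := fun t => 1 + t * c₂
    let a : ℝ → ℝ := fun t => π / max (b₁ t) (b₂ t)
    let G : ℝ → ℝ → ℝ := fun t s =>
      1 / s ^ 6 *
        (sin (b₂ t * s) ^ 2 * sin (b₁ t * s) *
            (b₁ t * s * cos (b₁ t * s) - sin (b₁ t * s)) +
          sin (b₁ t * s) ^ 2 * sin (b₂ t * s) *
            (b₂ t * s * cos (b₂ t * s) - sin (b₂ t * s)))
    (∀ᶠ t in 𝓝 (0:ℝ), G t (a t) = 0) ∧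
    (∀ k : ℕ, k ≤ 2 →
      iteratedFDeriv ℝ k (fun p : ℝ × ℝ => G p.1 p.2) (0, π) = 0) :=
  resonance_vanishing_general c₁ c₂
end
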